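/- Let δ : D → C be a split monomorphism (cosplitting in M) which is a coalgebra homomorphism in an abelian monoidal category M. Then D ∧_C D = Δ_C^{-1}(D ⊗ C + C ⊗ D), i.e. the wedge square of D in C equals the preimage under the comultiplication of the subobject (D ⊗ C) + (C ⊗ D) of C ⊗ C. -/

import Mathlib

/-!
Write `e = r ≫ δ` for the idempotent on `C` splitting off `D`. The identity of `C ⊗ C` decomposes as
`e ▷ C + (1 - e) ⊗ e + (1 - e) ⊗ (1 - e)`. Since `1 - e` factors through the cokernel projection `p`,
the last summand vanishes on `Ker (p ⊗ p)`, while the first two factor through `δ ▷ C` and `C ◁ δ`.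
Hence `(D ⊗ C) + (C ⊗ D) = Ker (p ⊗ p)`, and pulling back along `Δ_C` turns this kernel into the wedge.
-/

open CategoryTheory CategoryTheory.Limits MonoidalCategory

universe v u

variable {M : Type u} [Category.{v} M] [MonoidalCategory M] [Abelian M]

theorem CategoryTheory.MonoidalPreadditive.of_additive_whiskering
    {C : Type*} [Category C] [Preadditive C] [MonoidalCategory C]
    [∀ X : C, (tensorLeft X).Additive] [∀ X : C, (tensorRight X).Additive] :
    MonoidalPreadditive C where
  whiskerLeft_zero := (tensorLeft _).map_zero _ _
  zero_whiskerRight := (tensorRight _).map_zero _ _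
  whiskerLeft_add f g := (tensorLeft _).map_add (f := f) (g := g)
  add_whiskerRight f g := (tensorRight _).map_add (f := f) (g := g)

theorem CategoryTheory.Limits.pullback_kernelSubobject {C : Type*} [Category C]
    [HasZeroMorphisms C] [HasPullbacks C] {W X Y : C} (h : W ⟶ X) (f : X ⟶ Y) [HasKernel f]
    [HasKernel (h ≫ f)] :
    (Subobject.pullback h).obj (kernelSubobject f) = kernelSubobject (h ≫ f) := by
  apply le_antisymm
  · apply le_kernelSubobject
    rw [← Subobject.isPullback h (kernelSubobject f) |>.w_assoc, kernelSubobject_arrow_comp,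
      comp_zero]
  · refine Subobject.le_of_factors (pullback_factors h _ _ (kernelSubobject_factors _ _ ?_))
    rw [Category.assoc, kernelSubobject_arrow_comp]

section SplitMono

variable {C : Type*} [Category C] [Abelian C] [MonoidalCategory C] [MonoidalPreadditive C]
  {A X B Y : C} (i : A ⟶ X) (j : B ⟶ Y)

theorem imageSubobject_biprod_desc_whisker_le_kernelSubobject :
    imageSubobject (biprod.desc (i ▷ Y) (X ◁ j))
      ≤ kernelSubobject (cokernel.π i ⊗ₘ cokernel.π j) := by
  apply le_kernelSubobject
  apply imageSubobject_arrow_comp_eq_zero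
  apply biprod.hom_ext' <;> simp [whiskerRight_comp_tensorHom, whiskerLeft_comp_tensorHom]

theorem eq_comp_biprod_desc_whisker_of_comp_tensorHom_cokernel_π_eq_zero
    [IsSplitMono i] [IsSplitMono j] {W : C} (k : W ⟶ X ⊗ Y)
    (hk : k ≫ (cokernel.π i ⊗ₘ cokernel.π j) = 0) :
    k = biprod.lift (k ≫ retraction i ▷ Y) (k ≫ ((𝟙 X - retraction i ≫ i) ⊗ₘ retraction j))
      ≫ biprod.desc (i ▷ Y) (X ◁ j) := by
  set e := retraction i ≫ i
  set f := retraction j ≫ j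
  have hX : e + (𝟙 X - e) = 𝟙 X := add_sub_cancel e _
  have hY : f + (𝟙 Y - f) = 𝟙 Y := add_sub_cancel f _
  have hdecomp : e ▷ Y + (𝟙 X - e) ⊗ₘ f + (𝟙 X - e) ⊗ₘ (𝟙 Y - f) = 𝟙 (X ⊗ Y) := by
    rw [add_assoc, ← MonoidalPreadditive.tensor_add, hY, tensorHom_id,
      ← MonoidalPreadditive.add_whiskerRight, hX, id_whiskerRight]
  have hcompl : k ≫ ((𝟙 X - e) ⊗ₘ (𝟙 Y - f)) = 0 := by
    rw [← cokernel.π_desc i (𝟙 X - e) (by simp [e]), ← cokernel.π_desc j (𝟙 Y - f) (by simp [f]),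
      ← tensorHom_comp_tensorHom, reassoc_of% hk, zero_comp]
  calc k = k ≫ (e ▷ Y + (𝟙 X - e) ⊗ₘ f + (𝟙 X - e) ⊗ₘ (𝟙 Y - f)) := by
        rw [hdecomp, Category.comp_id]
    _ = k ≫ e ▷ Y + k ≫ ((𝟙 X - e) ⊗ₘ f) := by
        rw [Preadditive.comp_add, hcompl, add_zero, Preadditive.comp_add]
    _ = _ := by simp [e, f, tensorHom_comp_whiskerLeft]

theorem kernelSubobject_cokernel_tensorHom_le_imageSubobject [IsSplitMono i] [IsSplitMono j] :
    kernelSubobject (cokernel.π i ⊗ₘ cokernel.π j)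
      ≤ imageSubobject (biprod.desc (i ▷ Y) (X ◁ j)) := by
  apply Subobject.le_of_factors
  rw [eq_comp_biprod_desc_whisker_of_comp_tensorHom_cokernel_π_eq_zero i j _
    (kernelSubobject_arrow_comp _)]
  exact imageSubobject_factors_comp_self _ _

theorem imageSubobject_biprod_desc_whisker_eq_kernelSubobject [IsSplitMono i] [IsSplitMono j] :
    imageSubobject (biprod.desc (i ▷ Y) (X ◁ j))
      = kernelSubobject (cokernel.π i ⊗ₘ cokernel.π j) :=
  le_antisymm (imageSubobject_biprod_desc_whisker_le_kernelSubobject i j)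
    (kernelSubobject_cokernel_tensorHom_le_imageSubobject i j)

end SplitMono

/-- Let `δ : D → C` be a split monomorphism which is a coalgebra
homomorphism in an abelian monoidal category with left exact tensor functors.  Then
`D ∧_C D = Δ_C^{-1}(D ⊗ C + C ⊗ D)`: the wedge square of `D` in `C` (the kernel of
`(p ⊗ p) ∘ Δ_C`, `p` the cokernel projection of `δ`) equals the preimage under the
comultiplication of the subobject `(D ⊗ C) + (C ⊗ D)` of `C ⊗ C` (the image of the induced
morphism from the coproduct). -/
theorem stmt8
    [∀ X : M, PreservesFiniteLimits (tensorLeft X)]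
    [∀ X : M, PreservesFiniteLimits (tensorRight X)]
    (D C : Comon M) (δ : D ⟶ C) (r : C.X ⟶ D.X) (hr : δ.hom ≫ r = 𝟙 D.X) :
    kernelSubobject (C.comon.comul ≫ (cokernel.π δ.hom ⊗ₘ cokernel.π δ.hom))
      = (Subobject.pullback C.comon.comul).obj
          (imageSubobject (biprod.desc (δ.hom ▷ C.X) (C.X ◁ δ.hom))) := by
  have : ∀ X : M, (tensorLeft X).Additive := fun _ => Functor.additive_of_preserves_binary_products _
  have : ∀ X : M, (tensorRight X).Additive := fun _ => Functor.additive_of_preserves_binary_products _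
  have := MonoidalPreadditive.of_additive_whiskering (C := M)
  have : IsSplitMono δ.hom := IsSplitMono.mk' ⟨r, hr⟩
  rw [imageSubobject_biprod_desc_whisker_eq_kernelSubobject, pullback_kernelSubobject]
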